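/- arXiv:2203.02630 — 8 statements merged into one kernel-verified Lean document; each statement's English description precedes it below -/
import Mathlib

section
/- Let W ≥ 0 be a real number and H ≥ 1 a natural number. Let a_t[k] ≥ 0 for t ≥ 0 and 1 ≤ k ≤ H be nonnegative reals, and let (s_t)_{t≥0} be a sequence of positive reals such that for every t ≥ 1, s_t ≤ Σ_{k=1}^{min(t,H)} a_{t−1}[k]·s_{t−k} + W. If Σ_{t=0}^∞ Σ_{k=1}^H a_t[k] ≤ L for some L ≥ 0, then for all t ≥ 0: s_t ≤ e^{−t/H}·e^L·s_0 + W·(e^L + e − 1)/(e − 1). In particular the sequence (s_t) is bounded. -/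
/-!
With `Λ_t = ∑_{u<t} ∑_k a_u[k] ≤ L`, prove by strong induction the sharper bound
`s_t ≤ e^{-t/H} e^{Λ_t} s_0 + W (e^{Λ_t} + e - 1)/(e - 1)`.
The terms `s_{t+1-k}` in the recursion have `1 ≤ k ≤ H`, so their bounds exceed the one at
time `t+1` (with `Λ_t` in place of `Λ_{t+1}`) by at most a factor `e` in the decay term.
With `A = Λ_{t+1} - Λ_t`, this loss is absorbed by `e·A ≤ e^A`, since `e^{Λ_{t+1}} = e^{Λ_t} e^A`.
-/

open Real Finset

noncomputable def convolutionBound (H : ℕ) (s₀ W Λ : ℝ) (t : ℕ) : ℝ :=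
  exp (-(t : ℝ) / H) * exp Λ * s₀ + W * ((exp Λ + exp 1 - 1) / (exp 1 - 1))

lemma exp_one_sub_one_pos : (0 : ℝ) < exp 1 - 1 :=
  sub_pos.2 (one_lt_exp_iff.2 one_pos)

namespace convolutionBound

variable {H : ℕ} {s₀ W : ℝ}

lemma nonneg (hs₀ : 0 ≤ s₀) (hW : 0 ≤ W) (Λ : ℝ) (t : ℕ) :
    0 ≤ convolutionBound H s₀ W Λ t := by
  have := exp_one_sub_one_pos
  unfold convolutionBound
  have : 0 ≤ exp Λ + exp 1 - 1 := by linarith [exp_pos Λ]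
  positivity

lemma mono (hs₀ : 0 ≤ s₀) (hW : 0 ≤ W) {Λ Λ' : ℝ} (h : Λ ≤ Λ') (t : ℕ) :
    convolutionBound H s₀ W Λ t ≤ convolutionBound H s₀ W Λ' t := by
  have := exp_one_sub_one_pos
  unfold convolutionBound
  gcongr

lemma le_exp_one_mul_of_le_add (hs₀ : 0 ≤ s₀) {j t : ℕ} (hjt : t ≤ j + H) (Λ : ℝ) :
    convolutionBound H s₀ W Λ j ≤ convolutionBound H (exp 1 * s₀) W Λ t := by
  have hexp : exp (-(j : ℝ) / H) ≤ exp 1 * exp (-(t : ℝ) / H) := by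
    rw [← exp_add, exp_le_exp]
    have hjt' : (t : ℝ) ≤ j + H := by exact_mod_cast hjt
    have h : ((t : ℝ) - j) / H ≤ 1 := div_le_one_of_le₀ (by linarith) H.cast_nonneg
    rw [sub_div] at h
    rw [neg_div, neg_div]
    linarith
  unfold convolutionBound
  have := mul_le_mul_of_nonneg_right hexp (mul_nonneg (exp_pos Λ).le hs₀)
  linarith

lemma step (hs₀ : 0 ≤ s₀) (hW : 0 ≤ W) {Λ A : ℝ} (hΛ : 0 ≤ Λ) (hA : 0 ≤ A) (t : ℕ) :
    A * convolutionBound H (exp 1 * s₀) W Λ t + W ≤ convolutionBound H s₀ W (Λ + A) t := by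
  have hd := exp_one_sub_one_pos
  have heA : exp 1 * A ≤ exp A := exp_one_mul_le_exp
  have hP : 1 ≤ exp Λ := one_le_exp hΛ
  set E := exp (-(t : ℝ) / H)
  set P := exp Λ
  have hdecay : A * (E * P * (exp 1 * s₀)) ≤ E * P * exp A * s₀ := by
    have := mul_le_mul_of_nonneg_left heA (by positivity : 0 ≤ E * P * s₀)
    linarith
  have hgrowth : A * (P + exp 1 - 1) ≤ P * exp A :=
    calc A * (P + exp 1 - 1) ≤ exp 1 * A * P := by
          nlinarith [mul_nonneg (mul_nonneg hA hd.le) (sub_nonneg.2 hP)]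
      _ ≤ exp A * P := mul_le_mul_of_nonneg_right heA (zero_le_one.trans hP)
      _ = P * exp A := mul_comm _ _
  have hforcing : A * (W * ((P + exp 1 - 1) / (exp 1 - 1))) + W
      ≤ W * ((P * exp A + exp 1 - 1) / (exp 1 - 1)) := by
    have key : A * ((P + exp 1 - 1) / (exp 1 - 1)) + 1
        ≤ (P * exp A + exp 1 - 1) / (exp 1 - 1) := by
      rw [mul_div_assoc', div_add_one hd.ne', div_le_div_iff_of_pos_right hd]
      linarith
    nlinarith
  unfold convolutionBound
  rw [exp_add]
  linarith

end convolutionBound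

theorem le_convolutionBound_of_le_convolution {H : ℕ} {W : ℝ} (hW : 0 ≤ W)
    {a : ℕ → ℕ → ℝ} (ha : ∀ t, ∀ k ∈ Icc 1 H, 0 ≤ a t k) {s : ℕ → ℝ} (hs₀ : 0 ≤ s 0)
    (hrec : ∀ t, 1 ≤ t → s t ≤ (∑ k ∈ Icc 1 (min t H), a (t - 1) k * s (t - k)) + W) (t : ℕ) :
    s t ≤ convolutionBound H (s 0) W (∑ u ∈ range t, ∑ k ∈ Icc 1 H, a u k) t := by
  set A : ℕ → ℝ := fun u ↦ ∑ k ∈ Icc 1 H, a u k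
  have hA : ∀ u, 0 ≤ A u := fun u ↦ sum_nonneg (ha u)
  have hΛ : Monotone fun t ↦ ∑ u ∈ range t, A u := fun i j hij ↦
    sum_le_sum_of_subset_of_nonneg (range_subset_range.2 hij) fun u _ _ ↦ hA u
  induction t using Nat.strong_induction_on with
  | _ t ih =>
  cases t with
  | zero =>
    have := convolutionBound.nonneg (H := H) le_rfl hW 0 0
    simp only [convolutionBound, CharP.cast_eq_zero, neg_zero, zero_div, exp_zero,
      range_zero, sum_empty] at this ⊢
    linarith
  | succ n =>
    set B := convolutionBound H (exp 1 * s 0) W (∑ u ∈ range n, A u) (n + 1)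
    have hB : 0 ≤ B := convolutionBound.nonneg (by positivity) hW _ _
    have hprev : ∀ k ∈ Icc 1 (min (n + 1) H), s (n + 1 - k) ≤ B := by
      intro k hk
      obtain ⟨hk1, hkn, hkH⟩ : 1 ≤ k ∧ k ≤ n + 1 ∧ k ≤ H := by simp_all
      calc s (n + 1 - k)
          ≤ convolutionBound H (s 0) W (∑ u ∈ range (n + 1 - k), A u) (n + 1 - k) :=
            ih _ (by omega)
        _ ≤ convolutionBound H (s 0) W (∑ u ∈ range n, A u) (n + 1 - k) :=
            convolutionBound.mono hs₀ hW (hΛ (by omega)) _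
        _ ≤ B := convolutionBound.le_exp_one_mul_of_le_add hs₀ (by omega) _
    calc s (n + 1) ≤ (∑ k ∈ Icc 1 (min (n + 1) H), a n k * s (n + 1 - k)) + W :=
          hrec _ le_add_self
      _ ≤ A n * B + W := by
        gcongr
        calc ∑ k ∈ Icc 1 (min (n + 1) H), a n k * s (n + 1 - k)
            ≤ ∑ k ∈ Icc 1 (min (n + 1) H), a n k * B :=
              sum_le_sum fun k hk ↦ mul_le_mul_of_nonneg_left (hprev k hk)
                (ha n k (Icc_subset_Icc_right (min_le_right _ _) hk))
          _ ≤ ∑ k ∈ Icc 1 H, a n k * B :=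
              sum_le_sum_of_subset_of_nonneg (Icc_subset_Icc_right (min_le_right _ _))
                fun k hk _ ↦ mul_nonneg (ha n k hk) hB
          _ = A n * B := (sum_mul ..).symm
      _ ≤ convolutionBound H (s 0) W (∑ u ∈ range n, A u + A n) (n + 1) :=
        convolutionBound.step hs₀ hW (sum_nonneg fun u _ ↦ hA u) (hA n) _
      _ = _ := by rw [sum_range_succ]

theorem sufficient_condition_for_H_convolution_general
    (W L : ℝ) (hW : 0 ≤ W) (H : ℕ)
    (a : ℕ → ℕ → ℝ) (ha : ∀ t : ℕ, ∀ k ∈ Finset.Icc 1 H, 0 ≤ a t k)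
    (s : ℕ → ℝ) (hs : ∀ t : ℕ, 0 < s t)
    (hrec : ∀ t : ℕ, 1 ≤ t →
      s t ≤ (∑ k ∈ Finset.Icc 1 (min t H), a (t - 1) k * s (t - k)) + W)
    (hsum : ∀ T : ℕ, ∑ t ∈ Finset.range T, ∑ k ∈ Finset.Icc 1 H, a t k ≤ L) :
    ∀ t : ℕ, s t ≤ Real.exp (-(t : ℝ) / H) * Real.exp L * s 0 +
      W * ((Real.exp L + Real.exp 1 - 1) / (Real.exp 1 - 1)) := fun t ↦
  (le_convolutionBound_of_le_convolution hW ha (hs 0).le hrec t).trans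
    (convolutionBound.mono (hs 0).le hW (hsum t) t)

/-- **Sufficient condition for H-convolution.**
Let `W ≥ 0` be real, `H ≥ 1` natural.  Let `a t k ≥ 0` (for `1 ≤ k ≤ H`) and `s` a positive
sequence with `s t ≤ ∑_{k=1}^{min(t,H)} a (t-1) k * s (t-k) + W` for `t ≥ 1`.  If all partial sums
`∑_{t<T} ∑_{k=1}^H a t k` are bounded by `L ≥ 0` (i.e. `∑_{t=0}^∞ ∑_{k=1}^H a t k ≤ L`), then for
all `t`, `s t ≤ e^{-t/H} e^L s 0 + W (e^L + e - 1)/(e - 1)`. -/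
theorem sufficient_condition_for_H_convolution
    (W L : ℝ) (hW : 0 ≤ W) (hL : 0 ≤ L) (H : ℕ) (hH : 1 ≤ H)
    (a : ℕ → ℕ → ℝ) (ha : ∀ t : ℕ, ∀ k ∈ Finset.Icc 1 H, 0 ≤ a t k)
    (s : ℕ → ℝ) (hs : ∀ t : ℕ, 0 < s t)
    (hrec : ∀ t : ℕ, 1 ≤ t →
      s t ≤ (∑ k ∈ Finset.Icc 1 (min t H), a (t - 1) k * s (t - k)) + W)
    (hsum : ∀ T : ℕ, ∑ t ∈ Finset.range T, ∑ k ∈ Finset.Icc 1 H, a t k ≤ L) :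
    ∀ t : ℕ, s t ≤ Real.exp (-(t : ℝ) / H) * Real.exp L * s 0 +
      W * ((Real.exp L + Real.exp 1 - 1) / (Real.exp 1 - 1)) :=
  sufficient_condition_for_H_convolution_general W L hW H a ha s hs hrec hsum
end

section
/- For arbitrary real matrices X, Y ∈ ℝ^{n×m}, the identity X X⁺ − Y Y⁺ = (I − X X⁺)(X − Y) Y⁺ + [(I − Y Y⁺)(X − Y) X⁺]ᵀ holds. -/
/-!
With `P = X X⁺` and `Q = Y Y⁺`, the Penrose conditions give `(I - P) X = 0` and `(I - Q) Y = 0`,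
so the two terms on the right collapse to `-(I - P) Q` and `((I - Q) P)ᵀ = P (I - Q)`, the latter
because `P` and `Q` are symmetric. Their sum is `P - Q`.
-/

open Matrix

/-- `Xp` is the Moore–Penrose pseudoinverse of `X`: the four Penrose conditions. -/
def IsMoorePenrose {n m : ℕ} (X : Matrix (Fin n) (Fin m) ℝ)
    (Xp : Matrix (Fin m) (Fin n) ℝ) : Prop :=
  X * Xp * X = X ∧ Xp * X * Xp = Xp ∧ (X * Xp)ᵀ = X * Xp ∧ (Xp * X)ᵀ = Xp * X

theorem Matrix.one_sub_mul_eq_zero_of_mul_eq {ι κ R : Type*} [Fintype ι] [DecidableEq ι] [Ring R]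
    {P : Matrix ι ι R} {A : Matrix ι κ R} (h : P * A = A) : (1 - P) * A = 0 := by
  rw [Matrix.sub_mul, Matrix.one_mul, h, sub_self]

/-- For arbitrary real matrices `X, Y ∈ ℝ^{n×m}`:
`X X⁺ − Y Y⁺ = (I − X X⁺)(X − Y) Y⁺ + [(I − Y Y⁺)(X − Y) X⁺]ᵀ`. -/
theorem pseudoinverse_projection_difference_identity
    {n m : ℕ} (X Y : Matrix (Fin n) (Fin m) ℝ) (Xp Yp : Matrix (Fin m) (Fin n) ℝ)
    (hX : IsMoorePenrose X Xp) (hY : IsMoorePenrose Y Yp) :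
    X * Xp - Y * Yp = (1 - X * Xp) * (X - Y) * Yp + ((1 - Y * Yp) * (X - Y) * Xp)ᵀ := by
  obtain ⟨hXXpX, -, hXXp_symm, -⟩ := hX
  obtain ⟨hYYpY, -, hYYp_symm, -⟩ := hY
  have hP : (1 - X * Xp) * X = 0 := one_sub_mul_eq_zero_of_mul_eq hXXpX
  have hQ : (1 - Y * Yp) * Y = 0 := one_sub_mul_eq_zero_of_mul_eq hYYpY
  have left_term : (1 - X * Xp) * (X - Y) * Yp = -((1 - X * Xp) * (Y * Yp)) := by
    rw [Matrix.mul_sub, hP, zero_sub, Matrix.neg_mul, Matrix.mul_assoc]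
  have right_term : ((1 - Y * Yp) * (X - Y) * Xp)ᵀ = X * Xp * (1 - Y * Yp) := by
    rw [Matrix.mul_sub, hQ, sub_zero, Matrix.mul_assoc, transpose_mul, hXXp_symm,
      transpose_sub, transpose_one, hYYp_symm]
  rw [left_term, right_term, Matrix.sub_mul, Matrix.one_mul, Matrix.mul_sub, Matrix.mul_one]
  abel
end

section
/- For arbitrary real matrices X, Y ∈ ℝ^{n×m}, the orthogonal projections onto their column spaces satisfy ‖X X⁺ − Y Y⁺‖₂ ≤ ‖X − Y‖₂ · (‖X⁺‖₂ + ‖Y⁺‖₂). -/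
/-!
With `P = X X⁺` and `Q = Y Y⁺`, which are orthogonal projections, one has
`P - Q = (1 - Q) P - ((1 - P) Q)ᴴ`. Since `(1 - Q) Y = 0`, the first term equals
`(1 - Q) (X - Y) X⁺`, and `1 - Q` is again an orthogonal projection, hence of norm at most `1`;
so it has norm at most `‖X - Y‖ ‖X⁺‖`. The second term is bounded symmetrically by
`‖X - Y‖ ‖Y⁺‖`.
-/

open Matrix
open scoped Matrix.Norms.L2Operator

namespace Matrix

variable {m n : Type*} [Fintype m] [Fintype n]

theorem isStarProjection_mul_of_mul_mul_eq {α : Type*} [Semiring α] [StarRing α]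
    {Y : Matrix m n α} {Yp : Matrix n m α} (hY : Y * Yp * Y = Y)
    (hQ : IsSelfAdjoint (Y * Yp)) : IsStarProjection (Y * Yp) where
  isIdempotentElem := by rw [IsIdempotentElem, ← Matrix.mul_assoc, hY]
  isSelfAdjoint := hQ

variable {𝕜 : Type*} [RCLike 𝕜] [DecidableEq m] [DecidableEq n]

theorem l2_opNorm_one_sub_mul_mul_mul_le {X Y : Matrix m n 𝕜} {Xp Yp : Matrix n m 𝕜}
    (hY : Y * Yp * Y = Y) (hQ : IsSelfAdjoint (Y * Yp)) :
    ‖(1 - Y * Yp) * (X * Xp)‖ ≤ ‖X - Y‖ * ‖Xp‖ :=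
  calc ‖(1 - Y * Yp) * (X * Xp)‖
      = ‖(1 - Y * Yp) * ((X - Y) * Xp)‖ := by
        simp only [Matrix.sub_mul, Matrix.mul_sub, Matrix.one_mul, ← Matrix.mul_assoc, hY,
          sub_self, Matrix.zero_mul, sub_zero]
    _ ≤ ‖1 - Y * Yp‖ * (‖X - Y‖ * ‖Xp‖) :=
        (l2_opNorm_mul _ _).trans (by gcongr; exact l2_opNorm_mul _ _)
    _ ≤ ‖X - Y‖ * ‖Xp‖ :=
        mul_le_of_le_one_left (by positivity)
          (isStarProjection_mul_of_mul_mul_eq hY hQ).one_sub.norm_le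

theorem l2_opNorm_mul_sub_mul_le {X Y : Matrix m n 𝕜} {Xp Yp : Matrix n m 𝕜}
    (hX : X * Xp * X = X) (hY : Y * Yp * Y = Y)
    (hP : IsSelfAdjoint (X * Xp)) (hQ : IsSelfAdjoint (Y * Yp)) :
    ‖X * Xp - Y * Yp‖ ≤ ‖X - Y‖ * (‖Xp‖ + ‖Yp‖) := by
  have hdecomp : X * Xp - Y * Yp
      = (1 - Y * Yp) * (X * Xp) - star ((1 - X * Xp) * (Y * Yp)) := by
    rw [star_mul, star_sub, star_one, hP.star_eq, hQ.star_eq]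
    noncomm_ring
  calc ‖X * Xp - Y * Yp‖
      ≤ ‖(1 - Y * Yp) * (X * Xp)‖ + ‖(1 - X * Xp) * (Y * Yp)‖ := by
        rw [hdecomp, ← norm_star ((1 - X * Xp) * (Y * Yp))]
        exact norm_sub_le _ _
    _ ≤ ‖X - Y‖ * ‖Xp‖ + ‖Y - X‖ * ‖Yp‖ :=
        add_le_add (l2_opNorm_one_sub_mul_mul_mul_le hY hQ)
          (l2_opNorm_one_sub_mul_mul_mul_le hX hP)
    _ = ‖X - Y‖ * (‖Xp‖ + ‖Yp‖) := by rw [norm_sub_rev]; ring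

end Matrix

theorem IsMoorePenrose.isSelfAdjoint_mul {n m : ℕ} {X : Matrix (Fin n) (Fin m) ℝ}
    {Xp : Matrix (Fin m) (Fin n) ℝ} (hX : IsMoorePenrose X Xp) : IsSelfAdjoint (X * Xp) := by
  rw [IsSelfAdjoint, star_eq_conjTranspose, conjTranspose_eq_transpose_of_trivial, hX.2.2.1]

/-- For arbitrary real matrices `X, Y ∈ ℝ^{n×m}`, the orthogonal projections onto their
column spaces satisfy `‖X X⁺ − Y Y⁺‖₂ ≤ ‖X − Y‖₂ (‖X⁺‖₂ + ‖Y⁺‖₂)`, where `‖·‖₂` is the operator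
norm induced by the Euclidean vector norms (the scoped `Matrix.L2OpNorm` norm). -/
theorem pseudoinverse_projection_difference_opNorm_bound
    {n m : ℕ} (X Y : Matrix (Fin n) (Fin m) ℝ) (Xp Yp : Matrix (Fin m) (Fin n) ℝ)
    (hX : IsMoorePenrose X Xp) (hY : IsMoorePenrose Y Yp) :
    ‖X * Xp - Y * Yp‖ ≤ ‖X - Y‖ * (‖Xp‖ + ‖Yp‖) :=
  l2_opNorm_mul_sub_mul_le hX.1 hY.1 hX.isSelfAdjoint_mul hY.isSelfAdjoint_mul
end

section
/- Let H ≥ 1 and let A₁, A₂ ∈ ℝ^{n×n}. Then ‖G_w(A₁) − G_w(A₂)‖₂ ≤ ‖G_w(A₁)‖₂ · ‖G_w(A₂)‖₂ · ‖A₁ − A₂‖₂. -/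
/-
Write `S` for the `H × H` shift matrix, so that `G_w(A)` is the Neumann series
`∑_{k<H} (S ⊗ A)^k` of the nilpotent matrix `S ⊗ A`, i.e. `G_w(A) = (1 - S ⊗ A)⁻¹`. The resolvent
identity then gives `G_w(A₁) - G_w(A₂) = G_w(A₁) (S ⊗ (A₁ - A₂)) G_w(A₂)`, and it remains to see
that `‖S ⊗ M‖ ≤ ‖S‖ ‖M‖ ≤ ‖M‖`: the shift is a submatrix of an identity matrix, and submatrices
along injective index maps do not increase the operator norm.
-/

open Matrix
open scoped Matrix.Norms.L2Operator

/-- The block lower-triangular Toeplitz matrix `G_w(A) ∈ ℝ^{Hn×Hn}` whose `(i,j)` block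
(for `j ≤ i`) is `A^{i−j}` and whose blocks above the block diagonal are zero. -/
def Gw {n : ℕ} (H : ℕ) (A : Matrix (Fin n) (Fin n) ℝ) :
    Matrix (Fin H × Fin n) (Fin H × Fin n) ℝ :=
  Matrix.of fun p q =>
    if (q.1 : ℕ) ≤ (p.1 : ℕ) then (A ^ ((p.1 : ℕ) - (q.1 : ℕ))) p.2 q.2 else 0

open scoped Kronecker

theorem sub_eq_mul_sub_mul_of_mul_eq_one {R : Type*} [Ring R] {a a' b b' : R} (ha : a * a' = 1)
    (hb : b' * b = 1) : a - b = a * (b' - a') * b := by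
  rw [mul_sub, sub_mul, mul_assoc, hb, ha, one_mul, mul_one]

namespace Matrix

theorem kronecker_sub {R l m n p : Type*} [NonUnitalNonAssocRing R] (A : Matrix l m R)
    (B₁ B₂ : Matrix n p R) : A ⊗ₖ (B₁ - B₂) = A ⊗ₖ B₁ - A ⊗ₖ B₂ := by
  ext
  simp [mul_sub]

theorem kronecker_pow {R m n : Type*} [CommSemiring R] [Fintype m] [Fintype n] [DecidableEq m]
    [DecidableEq n] (A : Matrix m m R) (B : Matrix n n R) (k : ℕ) :
    (A ⊗ₖ B) ^ k = (A ^ k) ⊗ₖ (B ^ k) := by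
  induction k with
  | zero => simp
  | succ k ih => rw [pow_succ, ih, ← mul_kronecker_mul, ← pow_succ, ← pow_succ]

theorem kronecker_one_mulVec {R m n p : Type*} [CommSemiring R] [Fintype n] [Fintype p]
    [DecidableEq p] (A : Matrix m n R) (x : n × p → R) (i : m) (k : p) :
    (A ⊗ₖ (1 : Matrix p p R) *ᵥ x) (i, k) = (A *ᵥ fun j => x (j, k)) i := by
  simp [mulVec, dotProduct, Fintype.sum_prod_type, one_apply]

section L2OpNorm

variable {𝕜 l m n p : Type*} [RCLike 𝕜] [Fintype l] [Fintype m] [Fintype n] [Fintype p]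

theorem _root_.EuclideanSpace.norm_sq_eq_sum_norm_sq_slice (x : EuclideanSpace 𝕜 (n × p)) :
    ‖x‖ ^ 2 = ∑ k, ‖(EuclideanSpace.equiv n 𝕜).symm fun j => x (j, k)‖ ^ 2 := by
  simp only [EuclideanSpace.norm_sq_eq, Fintype.sum_prod_type]
  exact Finset.sum_comm

theorem l2_opNorm_le_of_mulVec_le [DecidableEq n] {A : Matrix m n 𝕜} {c : ℝ} (hc : 0 ≤ c)
    (h : ∀ x : EuclideanSpace 𝕜 n, ‖(EuclideanSpace.equiv m 𝕜).symm (A *ᵥ x)‖ ≤ c * ‖x‖) :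
    ‖A‖ ≤ c :=
  ContinuousLinearMap.opNorm_le_bound _ hc h

theorem l2_opNorm_one_le [DecidableEq n] : ‖(1 : Matrix n n 𝕜)‖ ≤ 1 := by
  rw [← diagonal_one, l2_opNorm_diagonal]
  exact pi_norm_le_iff_of_nonneg zero_le_one |>.mpr fun _ => norm_one.le

theorem l2_opNorm_mul_mul_le [DecidableEq m] [DecidableEq n] [DecidableEq p] (A : Matrix l m 𝕜)
    (B : Matrix m n 𝕜) (C : Matrix n p 𝕜) :
    ‖A * B * C‖ ≤ ‖A‖ * ‖B‖ * ‖C‖ :=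
  (l2_opNorm_mul _ _).trans (by gcongr; exact l2_opNorm_mul _ _)

theorem l2_opNorm_one_submatrix_id_le [DecidableEq m] [DecidableEq n] {e : n → m}
    (he : Function.Injective e) : ‖(1 : Matrix m m 𝕜).submatrix id e‖ ≤ 1 := by
  set E := (1 : Matrix m m 𝕜).submatrix id e
  have hE : Eᴴ * E = 1 := by
    ext i j
    simp [E, mul_apply, one_apply, he.eq_iff]
  have hsq : ‖E‖ * ‖E‖ ≤ 1 := by
    rw [← l2_opNorm_conjTranspose_mul_self, hE]
    exact l2_opNorm_one_le
  nlinarith [norm_nonneg E]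

theorem l2_opNorm_submatrix_le [DecidableEq l] [DecidableEq m] [DecidableEq n] [DecidableEq p]
    (A : Matrix m n 𝕜) {f : l → m} {g : p → n}
    (hf : Function.Injective f) (hg : Function.Injective g) : ‖A.submatrix f g‖ ≤ ‖A‖ := by
  have hfactor : A.submatrix f g =
      ((1 : Matrix m m 𝕜).submatrix id f)ᴴ * A * (1 : Matrix n n 𝕜).submatrix id g := by
    ext i j
    simp [mul_apply, one_apply]
  calc ‖A.submatrix f g‖
      ≤ ‖((1 : Matrix m m 𝕜).submatrix id f)ᴴ‖ * ‖A‖ * ‖(1 : Matrix n n 𝕜).submatrix id g‖ := by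
        rw [hfactor]
        exact l2_opNorm_mul_mul_le _ _ _
    _ ≤ 1 * ‖A‖ * 1 := by
        rw [l2_opNorm_conjTranspose]
        gcongr
        exacts [l2_opNorm_one_submatrix_id_le hf, l2_opNorm_one_submatrix_id_le hg]
    _ = ‖A‖ := by ring

theorem l2_opNorm_kronecker_one_le [DecidableEq n] [DecidableEq p] (A : Matrix m n 𝕜) :
    ‖A ⊗ₖ (1 : Matrix p p 𝕜)‖ ≤ ‖A‖ := by
  refine l2_opNorm_le_of_mulVec_le (norm_nonneg A) fun x => ?_
  refine (sq_le_sq₀ (norm_nonneg _) (by positivity)).mp ?_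
  rw [mul_pow, EuclideanSpace.norm_sq_eq_sum_norm_sq_slice,
    EuclideanSpace.norm_sq_eq_sum_norm_sq_slice, Finset.mul_sum]
  gcongr with k
  rw [← mul_pow]
  gcongr
  refine le_of_eq_of_le ?_
    (l2_opNorm_mulVec A ((EuclideanSpace.equiv n 𝕜).symm fun j => x (j, k)))
  congr 2
  ext i
  exact kronecker_one_mulVec A x i k

theorem l2_opNorm_kronecker_le [DecidableEq m] [DecidableEq n] [DecidableEq p] (A : Matrix l m 𝕜)
    (B : Matrix n p 𝕜) : ‖A ⊗ₖ B‖ ≤ ‖A‖ * ‖B‖ := by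
  have hswap :
      (1 : Matrix m m 𝕜) ⊗ₖ B = (B ⊗ₖ (1 : Matrix m m 𝕜)).submatrix Prod.swap Prod.swap := by
    ext ⟨i, k⟩ ⟨j, l⟩
    simp [mul_comm]
  calc ‖A ⊗ₖ B‖ = ‖A ⊗ₖ (1 : Matrix n n 𝕜) * (1 : Matrix m m 𝕜) ⊗ₖ B‖ := by
        rw [← mul_kronecker_mul, Matrix.mul_one, Matrix.one_mul]
    _ ≤ ‖A ⊗ₖ (1 : Matrix n n 𝕜)‖ * ‖(1 : Matrix m m 𝕜) ⊗ₖ B‖ := l2_opNorm_mul _ _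
    _ ≤ ‖A‖ * ‖B‖ := by
        rw [hswap]
        gcongr
        · exact l2_opNorm_kronecker_one_le A
        · exact (l2_opNorm_submatrix_le _ Prod.swap_injective Prod.swap_injective).trans
            (l2_opNorm_kronecker_one_le B)

end L2OpNorm

end Matrix

def shiftMatrix (R : Type*) [Zero R] [One R] (H : ℕ) : Matrix (Fin H) (Fin H) R :=
  of fun i j => if (i : ℕ) = j + 1 then 1 else 0

theorem shiftMatrix_pow_apply {R : Type*} [Semiring R] (H k : ℕ) (i j : Fin H) :
    (shiftMatrix R H ^ k) i j = if (i : ℕ) = j + k then 1 else 0 := by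
  induction k generalizing i with
  | zero => simp [one_apply, Fin.ext_iff]
  | succ k ih =>
    rw [pow_succ', mul_apply]
    simp only [ih]
    simp only [shiftMatrix, of_apply, boole_mul, ← ite_and]
    split_ifs with h
    · rw [Finset.sum_eq_single_of_mem ⟨j + k, by omega⟩ (Finset.mem_univ _)
        fun l _ hl => if_neg fun hl' => hl (Fin.ext hl'.2)]
      exact if_pos ⟨by simp only; omega, rfl⟩
    · exact Finset.sum_eq_zero fun l _ => if_neg (by omega)

theorem shiftMatrix_pow_self (R : Type*) [Semiring R] (H : ℕ) : shiftMatrix R H ^ H = 0 := by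
  ext i j
  rw [shiftMatrix_pow_apply, if_neg (by omega), Matrix.zero_apply]

theorem shiftMatrix_eq_submatrix_one (R : Type*) [Zero R] [One R] (H : ℕ) :
    shiftMatrix R H =
      (1 : Matrix (Fin (H + 1)) (Fin (H + 1)) R).submatrix Fin.castSucc Fin.succ := by
  ext i j
  simp [shiftMatrix, one_apply, Fin.ext_iff]

theorem l2_opNorm_shiftMatrix_le_one (𝕜 : Type*) [RCLike 𝕜] (H : ℕ) :
    ‖shiftMatrix 𝕜 H‖ ≤ 1 := by
  rw [shiftMatrix_eq_submatrix_one]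
  exact (l2_opNorm_submatrix_le _ (Fin.castSucc_injective H) (Fin.succ_injective H)).trans
    l2_opNorm_one_le

section Gw

variable {n : ℕ} (H : ℕ) (A : Matrix (Fin n) (Fin n) ℝ)

theorem Gw_eq_sum_pow : Gw H A = ∑ k ∈ Finset.range H, (shiftMatrix ℝ H ⊗ₖ A) ^ k := by
  ext ⟨i, a⟩ ⟨j, b⟩
  simp only [Gw, of_apply, kronecker_pow, Matrix.sum_apply, kronecker_apply, shiftMatrix_pow_apply,
    ite_mul, one_mul, zero_mul]
  split_ifs with h
  · rw [Finset.sum_eq_single (i - j : ℕ) (fun c _ hc => if_neg (by omega))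
      fun hij => absurd (Finset.mem_range.mpr (by omega)) hij, if_pos (by omega)]
  · exact (Finset.sum_eq_zero fun c _ => if_neg (by omega)).symm

theorem Gw_mul_one_sub : Gw H A * (1 - shiftMatrix ℝ H ⊗ₖ A) = 1 := by
  rw [Gw_eq_sum_pow, geom_sum_mul_neg, kronecker_pow, shiftMatrix_pow_self, zero_kronecker,
    sub_zero]

theorem one_sub_mul_Gw : (1 - shiftMatrix ℝ H ⊗ₖ A) * Gw H A = 1 := by
  rw [Gw_eq_sum_pow, mul_neg_geom_sum, kronecker_pow, shiftMatrix_pow_self, zero_kronecker,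
    sub_zero]

theorem Gw_sub_Gw (A₁ A₂ : Matrix (Fin n) (Fin n) ℝ) :
    Gw H A₁ - Gw H A₂ = Gw H A₁ * (shiftMatrix ℝ H ⊗ₖ (A₁ - A₂)) * Gw H A₂ := by
  rw [sub_eq_mul_sub_mul_of_mul_eq_one (Gw_mul_one_sub H A₁) (one_sub_mul_Gw H A₂),
    sub_sub_sub_cancel_left, kronecker_sub]

end Gw

theorem Gw_diff_opNorm_bound_general
    {n : ℕ} (H : ℕ) (A₁ A₂ : Matrix (Fin n) (Fin n) ℝ) :
    ‖Gw H A₁ - Gw H A₂‖ ≤ ‖Gw H A₁‖ * ‖Gw H A₂‖ * ‖A₁ - A₂‖ := by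
  have hshift : ‖shiftMatrix ℝ H ⊗ₖ (A₁ - A₂)‖ ≤ ‖A₁ - A₂‖ :=
    (l2_opNorm_kronecker_le _ _).trans <|
      mul_le_of_le_one_left (norm_nonneg _) (l2_opNorm_shiftMatrix_le_one ℝ H)
  calc ‖Gw H A₁ - Gw H A₂‖
      ≤ ‖Gw H A₁‖ * ‖shiftMatrix ℝ H ⊗ₖ (A₁ - A₂)‖ * ‖Gw H A₂‖ := by
        rw [Gw_sub_Gw]
        exact l2_opNorm_mul_mul_le _ _ _
    _ ≤ ‖Gw H A₁‖ * ‖A₁ - A₂‖ * ‖Gw H A₂‖ := by gcongr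
    _ = ‖Gw H A₁‖ * ‖Gw H A₂‖ * ‖A₁ - A₂‖ := by ring

/-- For `H ≥ 1` and `A₁, A₂ ∈ ℝ^{n×n}`:
`‖G_w(A₁) − G_w(A₂)‖₂ ≤ ‖G_w(A₁)‖₂ ‖G_w(A₂)‖₂ ‖A₁ − A₂‖₂`, with `‖·‖₂` the operator norm
induced by the Euclidean vector norm. -/
theorem Gw_diff_opNorm_bound
    {n : ℕ} (H : ℕ) (hH : 1 ≤ H) (A₁ A₂ : Matrix (Fin n) (Fin n) ℝ) :
    ‖Gw H A₁ - Gw H A₂‖ ≤ ‖Gw H A₁‖ * ‖Gw H A₂‖ * ‖A₁ - A₂‖ :=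
  Gw_diff_opNorm_bound_general H A₁ A₂
end

section
/- Let A ∈ ℝ^{n×n}, B ∈ ℝ^{n×m} and H ≥ 1. Then ‖G_u(A,B)‖₂ ≤ √(H · λ_max(W^u_H(A,B))), where λ_max denotes the largest eigenvalue of the positive semidefinite matrix W^u_H(A,B). -/
open Matrix
open scoped Matrix.Norms.L2Operator

/-- The block lower-triangular Toeplitz matrix `G_u(A,B) ∈ ℝ^{Hn×Hm}` whose `(i,j)` block
(for `j ≤ i`) is `A^{i−j}B` and whose blocks above the block diagonal are zero. -/
def Gu {n m : ℕ} (H : ℕ) (A : Matrix (Fin n) (Fin n) ℝ) (B : Matrix (Fin n) (Fin m) ℝ) :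
    Matrix (Fin H × Fin n) (Fin H × Fin m) ℝ :=
  Matrix.of fun p q =>
    if (q.1 : ℕ) ≤ (p.1 : ℕ) then (A ^ ((p.1 : ℕ) - (q.1 : ℕ)) * B) p.2 q.2 else 0

/-- The `H`-th controllability Grammian `W^u_H(A,B) = ∑_{i=0}^{H−1} A^i B Bᵀ (Aᵀ)^i`. -/
def Wu {n m : ℕ} (H : ℕ) (A : Matrix (Fin n) (Fin n) ℝ) (B : Matrix (Fin n) (Fin m) ℝ) :
    Matrix (Fin n) (Fin n) ℝ :=
  ∑ i ∈ Finset.range H, A ^ i * B * Bᵀ * (Aᵀ) ^ i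

/-!
Write `R_i = [A^i B, …, A B, B, 0, …, 0]` for the `i`-th block row of `G_u`. Then
`R_i R_iᵀ = W^u_{i+1} ≤ W^u_H` in the Loewner order, so the Rayleigh bound gives
`‖R_i‖² = ‖R_iᵀ‖² ≤ λ_max(W^u_H)`, and `‖G_u x‖² = ∑_i ‖R_i x‖² ≤ H · λ_max(W^u_H) · ‖x‖²`.
-/

open scoped MatrixOrder

namespace Matrix

variable {ι m n : Type*} [Fintype ι] [Fintype m] [Fintype n] [DecidableEq n]

lemma IsHermitian.dotProduct_mulVec_le_iSup_eigenvalues {M : Matrix n n ℝ}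
    (hM : M.IsHermitian) (x : n → ℝ) :
    x ⬝ᵥ (M *ᵥ x) ≤ (⨆ i, hM.eigenvalues i) * (x ⬝ᵥ x) := by
  have hle : M ≤ algebraMap ℝ (Matrix n n ℝ) (⨆ i, hM.eigenvalues i) := by
    refine le_algebraMap_of_spectrum_le fun r hr => ?_
    rw [hM.spectrum_real_eq_range_eigenvalues] at hr
    obtain ⟨i, rfl⟩ := hr
    exact le_ciSup (Set.finite_range _).bddAbove i
  simpa [sub_mulVec, dotProduct_sub, Algebra.algebraMap_eq_smul_one, smul_mulVec,
    dotProduct_smul] using (le_iff.mp hle).dotProduct_mulVec_nonneg x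

lemma PosSemidef.iSup_eigenvalues_nonneg {M : Matrix n n ℝ}
    (hM : M.PosSemidef) : 0 ≤ ⨆ i, hM.1.eigenvalues i :=
  Real.iSup_nonneg hM.eigenvalues_nonneg

lemma l2_opNorm_le_sqrt_iff (M : Matrix m n ℝ) {c : ℝ} (hc : 0 ≤ c) :
    ‖M‖ ≤ √c ↔ ∀ x, (M *ᵥ x) ⬝ᵥ (M *ᵥ x) ≤ c * (x ⬝ᵥ x) := by
  rw [l2_opNorm_def, ContinuousLinearMap.opNorm_le_iff (Real.sqrt_nonneg c),
    (WithLp.equiv 2 (n → ℝ)).symm.forall_congr_left]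
  refine forall_congr' fun x => ?_
  rw [← pow_le_pow_iff_left₀ (norm_nonneg _) (by positivity) two_ne_zero, mul_pow,
    Real.sq_sqrt hc, ← real_inner_self_eq_norm_sq, ← real_inner_self_eq_norm_sq,
    EuclideanSpace.inner_eq_star_dotProduct, EuclideanSpace.inner_eq_star_dotProduct]
  rfl

lemma l2_opNorm_le_sqrt_of_submatrix_prodMk (M : Matrix (ι × m) n ℝ) {c : ℝ} (hc : 0 ≤ c)
    (h : ∀ i, ‖M.submatrix (Prod.mk i) id‖ ≤ √c) : ‖M‖ ≤ √(Fintype.card ι * c) := by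
  rw [l2_opNorm_le_sqrt_iff _ (by positivity)]
  intro x
  calc (M *ᵥ x) ⬝ᵥ (M *ᵥ x)
      = ∑ i, (M.submatrix (Prod.mk i) id *ᵥ x) ⬝ᵥ (M.submatrix (Prod.mk i) id *ᵥ x) :=
        Fintype.sum_prod_type _
    _ ≤ ∑ _i : ι, c * (x ⬝ᵥ x) :=
        Finset.sum_le_sum fun i _ => (l2_opNorm_le_sqrt_iff _ hc).mp (h i) x
    _ = Fintype.card ι * c * (x ⬝ᵥ x) := by
        rw [Finset.sum_const, Finset.card_univ, nsmul_eq_mul, mul_assoc]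

end Matrix

section Grammian

variable {n m : ℕ} (A : Matrix (Fin n) (Fin n) ℝ) (B : Matrix (Fin n) (Fin m) ℝ)

lemma Wu_eq_sum_mul_transpose (H : ℕ) :
    Wu H A B = ∑ k ∈ Finset.range H, (A ^ k * B) * (A ^ k * B)ᵀ := by
  simp only [Wu, transpose_mul, transpose_pow, Matrix.mul_assoc]

lemma Wu_posSemidef (H : ℕ) : (Wu H A B).PosSemidef := by
  rw [Wu_eq_sum_mul_transpose]
  exact posSemidef_sum _ fun k _ => posSemidef_self_mul_conjTranspose (A ^ k * B)

lemma dotProduct_Wu_mulVec (H : ℕ) (y : Fin n → ℝ) :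
    y ⬝ᵥ (Wu H A B *ᵥ y) =
      ∑ k ∈ Finset.range H, ((A ^ k * B)ᵀ *ᵥ y) ⬝ᵥ ((A ^ k * B)ᵀ *ᵥ y) := by
  rw [Wu_eq_sum_mul_transpose, sum_mulVec, dotProduct_sum]
  refine Finset.sum_congr rfl fun k _ => ?_
  rw [← mulVec_mulVec, dotProduct_mulVec, ← mulVec_transpose]

lemma dotProduct_Wu_mulVec_mono {H H' : ℕ} (h : H ≤ H') (y : Fin n → ℝ) :
    y ⬝ᵥ (Wu H A B *ᵥ y) ≤ y ⬝ᵥ (Wu H' A B *ᵥ y) := by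
  simp only [dotProduct_Wu_mulVec]
  exact Finset.sum_le_sum_of_subset_of_nonneg (Finset.range_subset_range.mpr h)
    fun k _ _ => dotProduct_self_star_nonneg _

end Grammian

section BlockRow

variable {n m H : ℕ} (A : Matrix (Fin n) (Fin n) ℝ) (B : Matrix (Fin n) (Fin m) ℝ)

lemma vecMul_Gu_submatrix (i : Fin H) (y : Fin n → ℝ) :
    y ᵥ* (Gu H A B).submatrix (Prod.mk i) id = fun p =>
      if p.1 ≤ i then ((A ^ ((i : ℕ) - p.1) * B)ᵀ *ᵥ y) p.2 else 0 := by
  ext ⟨j, b⟩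
  by_cases hji : j ≤ i <;> simp [vecMul, mulVec, dotProduct, Gu, hji, mul_comm]

lemma vecMul_Gu_submatrix_dotProduct_self (i : Fin H) (y : Fin n → ℝ) :
    (y ᵥ* (Gu H A B).submatrix (Prod.mk i) id) ⬝ᵥ (y ᵥ* (Gu H A B).submatrix (Prod.mk i) id) =
      y ⬝ᵥ (Wu (i + 1) A B *ᵥ y) := by
  set f : ℕ → ℝ := fun k => ((A ^ k * B)ᵀ *ᵥ y) ⬝ᵥ ((A ^ k * B)ᵀ *ᵥ y)
  calc _ = ∑ j : Fin H, if j ≤ i then f (i - j) else 0 := by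
        simp only [vecMul_Gu_submatrix, dotProduct, Fintype.sum_prod_type]
        refine Finset.sum_congr rfl fun j _ => ?_
        split_ifs <;> simp [f, dotProduct]
    _ = ∑ j ∈ Finset.range H, if j ≤ (i : ℕ) then f (i - j) else 0 :=
        Fin.sum_univ_eq_sum_range (fun j => if j ≤ (i : ℕ) then f (i - j) else 0) H
    _ = ∑ j ∈ Finset.range (i + 1), f (i + 1 - 1 - j) := by
        rw [← Finset.sum_subset (Finset.range_subset_range.mpr i.2)
          fun j _ hj => if_neg (by simpa using hj)]
        refine Finset.sum_congr rfl fun j hj => ?_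
        rw [if_pos (Nat.lt_succ_iff.mp (Finset.mem_range.mp hj)), Nat.add_sub_cancel]
    _ = y ⬝ᵥ (Wu (i + 1) A B *ᵥ y) := by
        rw [Finset.sum_range_reflect, dotProduct_Wu_mulVec]

lemma l2_opNorm_Gu_submatrix_le (hW : (Wu H A B).IsHermitian) (i : Fin H) :
    ‖(Gu H A B).submatrix (Prod.mk i) id‖ ≤ √(⨆ k, hW.eigenvalues k) := by
  rw [← l2_opNorm_conjTranspose, conjTranspose_eq_transpose_of_trivial,
    l2_opNorm_le_sqrt_iff _ (Wu_posSemidef A B H).iSup_eigenvalues_nonneg]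
  intro y
  rw [mulVec_transpose, vecMul_Gu_submatrix_dotProduct_self]
  exact (dotProduct_Wu_mulVec_mono A B i.2 y).trans
    (hW.dotProduct_mulVec_le_iSup_eigenvalues y)

end BlockRow

theorem Gu_opNorm_le_sqrt_grammian_general
    {n m : ℕ} (H : ℕ)
    (A : Matrix (Fin n) (Fin n) ℝ) (B : Matrix (Fin n) (Fin m) ℝ)
    (hW : (Wu H A B).IsHermitian) :
    ‖Gu H A B‖ ≤ Real.sqrt ((H : ℝ) * ⨆ i : Fin n, hW.eigenvalues i) := by
  simpa using l2_opNorm_le_sqrt_of_submatrix_prodMk (Gu H A B)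
    (Wu_posSemidef A B H).iSup_eigenvalues_nonneg (l2_opNorm_Gu_submatrix_le A B hW)

/-- For `A ∈ ℝ^{n×n}`, `B ∈ ℝ^{n×m}` and `H ≥ 1`:
`‖G_u(A,B)‖₂ ≤ √(H · λ_max(W^u_H(A,B)))`, where `λ_max` is the largest eigenvalue of the
(symmetric positive semidefinite) Grammian. -/
theorem Gu_opNorm_le_sqrt_grammian
    {n m : ℕ} (H : ℕ) (hH : 1 ≤ H)
    (A : Matrix (Fin n) (Fin n) ℝ) (B : Matrix (Fin n) (Fin m) ℝ)
    (hW : (Wu H A B).IsHermitian) :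
    ‖Gu H A B‖ ≤ Real.sqrt ((H : ℝ) * ⨆ i : Fin n, hW.eigenvalues i) :=
  Gu_opNorm_le_sqrt_grammian_general H A B hW
end

section
/- Let A ∈ ℝ^{n×n} and H ≥ 1. Then ‖G_w(A)‖₂ ≤ √(H · λ_max(W^w_H(A))), where λ_max denotes the largest eigenvalue of the positive semidefinite matrix W^w_H(A). -/
/-! Write `G_i` for the `i`-th block row of `G_w(A)`. Since `G_wᵀ G_w = ∑ᵢ G_iᵀ G_i`, the C⋆-identity
gives `‖G_w‖² ≤ ∑ᵢ ‖G_i‖²`. Each `G_i G_iᵀ` is the Grammian `W^w_{i+1}(A)`, which lies below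
`W^w_H(A) ≤ λ_max · 1` in the Loewner order, so `‖G_i‖² ≤ λ_max`; summing over the `H` block rows
gives `‖G_w‖² ≤ H λ_max`. -/

open Matrix
open scoped Matrix.Norms.L2Operator

/-- The `H`-th disturbance controllability Grammian `W^w_H(A) = ∑_{i=0}^{H−1} A^i (Aᵀ)^i`. -/
def Ww {n : ℕ} (H : ℕ) (A : Matrix (Fin n) (Fin n) ℝ) : Matrix (Fin n) (Fin n) ℝ :=
  ∑ i ∈ Finset.range H, A ^ i * (Aᵀ) ^ i

open scoped MatrixOrder ComplexOrder

namespace Matrix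

variable {ι m k 𝕜 : Type*} [Fintype ι] [Fintype m]

lemma conjTranspose_mul_self_eq_sum_submatrix {α : Type*} [NonUnitalNonAssocSemiring α]
    [StarRing α] (M : Matrix (ι × m) k α) :
    Mᴴ * M = ∑ i, (M.submatrix (Prod.mk i) id)ᴴ * M.submatrix (Prod.mk i) id := by
  ext p q
  simp [mul_apply, Fintype.sum_prod_type, Matrix.sum_apply]

variable [Fintype k] [DecidableEq k] [RCLike 𝕜]

lemma l2_opNorm_sq_le_sum_submatrix (M : Matrix (ι × m) k 𝕜) :
    ‖M‖ ^ 2 ≤ ∑ i, ‖M.submatrix (Prod.mk i) id‖ ^ 2 := by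
  calc ‖M‖ ^ 2 = ‖Mᴴ * M‖ := by rw [l2_opNorm_conjTranspose_mul_self, sq]
    _ ≤ ∑ i, ‖(M.submatrix (Prod.mk i) id)ᴴ * M.submatrix (Prod.mk i) id‖ := by
      rw [conjTranspose_mul_self_eq_sum_submatrix]
      exact norm_sum_le _ _
    _ = ∑ i, ‖M.submatrix (Prod.mk i) id‖ ^ 2 := by
      simp only [l2_opNorm_conjTranspose_mul_self, sq]

lemma l2_opNorm_sq_le_of_mul_conjTranspose_le [DecidableEq m] {M : Matrix m k 𝕜} {c : ℝ}
    (hc : 0 ≤ c) (hM : M * Mᴴ ≤ c • 1) : ‖M‖ ^ 2 ≤ c := by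
  rw [← l2_opNorm_conjTranspose, ← Real.le_sqrt (norm_nonneg _) hc]
  refine ContinuousLinearMap.opNorm_le_bound _ (Real.sqrt_nonneg c) fun x => ?_
  rw [← Real.sqrt_sq (norm_nonneg x), ← Real.sqrt_mul hc,
    Real.le_sqrt (norm_nonneg _) (by positivity), ← RCLike.ofReal_le_ofReal (K := 𝕜)]
  have hquad := (le_iff.mp hM).dotProduct_mulVec_nonneg (WithLp.ofLp x)
  rw [sub_mulVec, dotProduct_sub, smul_mulVec, one_mulVec, dotProduct_smul, ← mulVec_mulVec,
    dotProduct_mulVec, ← conjTranspose_conjTranspose M, ← star_mulVec,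
    conjTranspose_conjTranspose, sub_nonneg] at hquad
  push_cast
  rw [← @inner_self_eq_norm_sq_to_K 𝕜, ← @inner_self_eq_norm_sq_to_K 𝕜,
    EuclideanSpace.inner_eq_star_dotProduct, EuclideanSpace.inner_eq_star_dotProduct,
    dotProduct_comm, dotProduct_comm (WithLp.ofLp x), ← RCLike.real_smul_eq_coe_mul]
  exact hquad

lemma IsHermitian.le_iSup_eigenvalues_smul_one [DecidableEq m] {W : Matrix m m ℝ}
    (hW : W.IsHermitian) : W ≤ (⨆ i, hW.eigenvalues i) • 1 := by
  rw [← Algebra.algebraMap_eq_smul_one]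
  refine le_algebraMap_of_spectrum_le (fun x hx => ?_) hW
  obtain ⟨i, rfl⟩ := hW.spectrum_real_eq_range_eigenvalues ▸ hx
  exact le_ciSup (Set.finite_range _).bddAbove i

end Matrix

lemma Fin.sum_ite_le_tsub_eq_sum_range {M : Type*} [AddCommMonoid M] {H : ℕ} (i : Fin H)
    (f : ℕ → M) :
    ∑ j : Fin H, (if (j : ℕ) ≤ i then f (i - j) else 0) = ∑ k ∈ Finset.range (i + 1), f k := by
  rw [Fin.sum_univ_eq_sum_range (fun j => if j ≤ (i : ℕ) then f (i - j) else 0),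
    ← Finset.sum_filter]
  have hfilter : (Finset.range H).filter (· ≤ (i : ℕ)) = Finset.range (i + 1) := by
    ext j
    simp only [Finset.mem_filter, Finset.mem_range]
    omega
  rw [hfilter, ← Finset.sum_range_reflect]
  refine Finset.sum_congr rfl fun j hj => ?_
  have := Finset.mem_range.mp hj
  congr 1
  omega

lemma Gw_submatrix_mul_conjTranspose {n : ℕ} (H : ℕ) (A : Matrix (Fin n) (Fin n) ℝ) (i : Fin H) :
    (Gw H A).submatrix (Prod.mk i) id * ((Gw H A).submatrix (Prod.mk i) id)ᴴ = Ww (i + 1) A := by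
  rw [Ww, ← Fin.sum_ite_le_tsub_eq_sum_range]
  ext a b
  simp only [Gw, mul_apply, Fintype.sum_prod_type, Matrix.sum_apply, submatrix_apply, id,
    conjTranspose_apply, of_apply, star_trivial]
  refine Finset.sum_congr rfl fun j _ => ?_
  split_ifs <;> simp [mul_apply, ← transpose_pow]

lemma Ww_mono {n : ℕ} (A : Matrix (Fin n) (Fin n) ℝ) : Monotone (Ww · A) := by
  intro k H hkH
  refine Finset.sum_le_sum_of_subset_of_nonneg (Finset.range_subset_range.mpr hkH) fun j _ _ => ?_
  rw [← transpose_pow, ← conjTranspose_eq_transpose_of_trivial, ← star_eq_conjTranspose]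
  exact mul_star_self_nonneg _

theorem Gw_opNorm_le_sqrt_grammian_general
    {n : ℕ} (H : ℕ) (A : Matrix (Fin n) (Fin n) ℝ)
    (hW : (Ww H A).IsHermitian) :
    ‖Gw H A‖ ≤ Real.sqrt ((H : ℝ) * ⨆ i : Fin n, hW.eigenvalues i) := by
  set lam := ⨆ i : Fin n, hW.eigenvalues i
  have hPSD : (Ww H A).PosSemidef := by
    simpa [Ww, nonneg_iff_posSemidef] using Ww_mono A (Nat.zero_le H)
  have hlam : 0 ≤ lam := Real.iSup_nonneg hPSD.eigenvalues_nonneg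
  have hrow (i : Fin H) : ‖(Gw H A).submatrix (Prod.mk i) id‖ ^ 2 ≤ lam := by
    refine l2_opNorm_sq_le_of_mul_conjTranspose_le hlam ?_
    rw [Gw_submatrix_mul_conjTranspose]
    exact (Ww_mono A i.isLt).trans hW.le_iSup_eigenvalues_smul_one
  rw [Real.le_sqrt (norm_nonneg _) (by positivity)]
  calc ‖Gw H A‖ ^ 2 ≤ ∑ i : Fin H, ‖(Gw H A).submatrix (Prod.mk i) id‖ ^ 2 :=
        l2_opNorm_sq_le_sum_submatrix _
    _ ≤ ∑ _i : Fin H, lam := Finset.sum_le_sum fun i _ => hrow i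
    _ = H * lam := by simp

/-- For `A ∈ ℝ^{n×n}` and `H ≥ 1`: `‖G_w(A)‖₂ ≤ √(H · λ_max(W^w_H(A)))`, where `λ_max` is the
largest eigenvalue of the (symmetric positive semidefinite) Grammian. -/
theorem Gw_opNorm_le_sqrt_grammian
    {n : ℕ} (H : ℕ) (hH : 1 ≤ H) (A : Matrix (Fin n) (Fin n) ℝ)
    (hW : (Ww H A).IsHermitian) :
    ‖Gw H A‖ ≤ Real.sqrt ((H : ℝ) * ⨆ i : Fin n, hW.eigenvalues i) :=
  Gw_opNorm_le_sqrt_grammian_general H A hW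
end

section
/- Let A ∈ ℝ^{n×n}, B ∈ ℝ^{n×m} and H ≥ 1, and suppose the matrix P_H(A,B) = [A^{H−1}B, A^{H−2}B, …, B] ∈ ℝ^{n×Hm} has full row rank n. Then the finite-impulse-response system-level-synthesis constraint is feasible: there exist matrices Φˣ₀, Φˣ₁, …, Φˣ_H ∈ ℝ^{n×n} and Φᵘ₀, …, Φᵘ_{H−1} ∈ ℝ^{m×n} such that Φˣ₀ = I, Φˣ_{k+1} = A·Φˣ_k + B·Φᵘ_k for all 0 ≤ k ≤ H−1, and Φˣ_H = 0. -/
/-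
The columns of `-A^H` lie in the column space of `P_H(A,B)`, which is all of `ℝⁿ`, so
`P_H(A,B) X = -A^H` for some `X ∈ ℝ^{Hm×n}`. Cutting `X` into its `H` blocks of `m` rows gives
inputs `Φᵘ_k`; the recursion then unrolls to
`Φˣ_H = A^H + ∑_k A^{H-1-k} B Φᵘ_k = A^H + P_H(A,B) X = 0`.
-/

open Matrix

/-- The `H`-step controllability matrix `P_H(A,B) = [A^{H−1}B, …, B] ∈ ℝ^{n×Hm}`. -/
def PH {n m : ℕ} (H : ℕ) (A : Matrix (Fin n) (Fin n) ℝ) (B : Matrix (Fin n) (Fin m) ℝ) :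
    Matrix (Fin n) (Fin H × Fin m) ℝ :=
  Matrix.of fun i q => (A ^ (H - 1 - (q.1 : ℕ)) * B) i q.2

open Finset

theorem Matrix.exists_mul_eq_of_rank_eq_card {K ι κ p : Type*} [Field K] [Fintype ι] [Fintype κ]
    (M : Matrix ι κ K) (hM : M.rank = Fintype.card ι) (Y : Matrix ι p K) :
    ∃ X : Matrix κ p K, M * X = Y := by
  classical
  have hrange : LinearMap.range M.mulVecLin = ⊤ :=
    Submodule.eq_top_of_finrank_eq (by rw [← Matrix.rank, hM, Module.finrank_fintype_fun_eq_card])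
  choose v hv using fun j => LinearMap.range_eq_top.mp hrange (fun i => Y i j)
  refine ⟨(Matrix.of v)ᵀ, ?_⟩
  ext i j
  simpa [Matrix.mul_apply, Matrix.mulVec, dotProduct] using congrFun (hv j) i

section ImpulseResponse

variable {n m R : Type*} [Fintype n] [DecidableEq n] [Fintype m] [Semiring R]

def impulseResponse (A : Matrix n n R) (B : Matrix n m R) (Φu : ℕ → Matrix m n R) :
    ℕ → Matrix n n R
  | 0 => 1
  | k + 1 => A * impulseResponse A B Φu k + B * Φu k

theorem impulseResponse_eq (A : Matrix n n R) (B : Matrix n m R) (Φu : ℕ → Matrix m n R)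
    (k : ℕ) :
    impulseResponse A B Φu k = A ^ k + ∑ t ∈ range k, A ^ (k - 1 - t) * B * Φu t := by
  induction k with
  | zero => simp [impulseResponse]
  | succ k ih =>
    have hshift :
        ∀ t ∈ range k, A * (A ^ (k - 1 - t) * B * Φu t) = A ^ (k - t) * B * Φu t := by
      intro t ht
      have hexp : k - 1 - t + 1 = k - t := by
        have := mem_range.mp ht
        omega
      rw [← Matrix.mul_assoc, ← Matrix.mul_assoc, ← pow_succ', hexp]
    rw [impulseResponse, ih, Matrix.mul_add, Finset.mul_sum, sum_congr rfl hshift,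
      sum_range_succ, ← pow_succ', Nat.add_sub_cancel, Nat.sub_self, pow_zero, Matrix.one_mul,
      add_assoc]

end ImpulseResponse

def rowBlock {H m : ℕ} {ι R : Type*} [Zero R] (X : Matrix (Fin H × Fin m) ι R) (k : ℕ) :
    Matrix (Fin m) ι R :=
  if hk : k < H then X.submatrix (fun r => (⟨k, hk⟩, r)) id else 0

theorem PH_mul {n m H : ℕ} {ι : Type*} (A : Matrix (Fin n) (Fin n) ℝ)
    (B : Matrix (Fin n) (Fin m) ℝ) (X : Matrix (Fin H × Fin m) ι ℝ) :
    PH H A B * X = ∑ t ∈ range H, A ^ (H - 1 - t) * B * rowBlock X t := by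
  ext i j
  rw [← Fin.sum_univ_eq_sum_range (fun t => A ^ (H - 1 - t) * B * rowBlock X t), Matrix.sum_apply,
    Matrix.mul_apply, Fintype.sum_prod_type]
  refine sum_congr rfl fun t _ => ?_
  simp [rowBlock, PH, Matrix.mul_apply]

theorem sls_fir_feasible_of_fullRowRank_general
    {n m : ℕ} (H : ℕ)
    (A : Matrix (Fin n) (Fin n) ℝ) (B : Matrix (Fin n) (Fin m) ℝ)
    (hrank : (PH H A B).rank = n) :
    ∃ (Φx : ℕ → Matrix (Fin n) (Fin n) ℝ) (Φu : ℕ → Matrix (Fin m) (Fin n) ℝ),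
      Φx 0 = 1 ∧ (∀ k < H, Φx (k + 1) = A * Φx k + B * Φu k) ∧ Φx H = 0 := by
  obtain ⟨X, hX⟩ := (PH H A B).exists_mul_eq_of_rank_eq_card (by simpa using hrank) (-(A ^ H))
  refine ⟨impulseResponse A B (rowBlock X), rowBlock X, rfl, fun _ _ => rfl, ?_⟩
  rw [impulseResponse_eq, ← PH_mul, hX, add_neg_cancel]

/-- If the `H`-step controllability matrix `P_H(A,B)` has full row rank `n`, then the
finite-impulse-response System Level Synthesis constraint is feasible: there exist
`Φˣ₀, …, Φˣ_H` and `Φᵘ₀, …, Φᵘ_{H−1}` with `Φˣ₀ = I`, `Φˣ_{k+1} = A Φˣ_k + B Φᵘ_k` for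
`0 ≤ k ≤ H−1`, and `Φˣ_H = 0`. -/
theorem sls_fir_feasible_of_fullRowRank
    {n m : ℕ} (H : ℕ) (hH : 1 ≤ H)
    (A : Matrix (Fin n) (Fin n) ℝ) (B : Matrix (Fin n) (Fin m) ℝ)
    (hrank : (PH H A B).rank = n) :
    ∃ (Φx : ℕ → Matrix (Fin n) (Fin n) ℝ) (Φu : ℕ → Matrix (Fin m) (Fin n) ℝ),
      Φx 0 = 1 ∧ (∀ k < H, Φx (k + 1) = A * Φx k + B * Φu k) ∧ Φx H = 0 :=
  sls_fir_feasible_of_fullRowRank_general H A B hrank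
end

section
/- Let d ≥ 1 and let K₀ ⊇ K₁ ⊇ … ⊇ K_T be a nested sequence of nonempty compact convex subsets of ℝ^d. For a nonempty compact convex set K ⊆ ℝ^d, its Steiner point is St(K) := d·E_{v}[v · sup_{q ∈ K} ⟨v, q⟩], where the expectation is over v drawn uniformly from the unit sphere S^{d−1}. Then the total movement of the Steiner point selections satisfies Σ_{t=0}^{T−1} ‖St(K_{t+1}) − St(K_t)‖ ≤ (d/2) · diam(K₀), where diam(K₀) is the Euclidean diameter of K₀. -/
open MeasureTheory Metric
open scoped RealInnerProductSpace

/-- The uniform probability distribution on the unit sphere of `EuclideanSpace ℝ (Fin d)`: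
the normalized rotation-invariant surface measure. -/
noncomputable def uniformSphereMeasure (d : ℕ) :
    Measure (sphere (0 : EuclideanSpace ℝ (Fin d)) 1) :=
  (((volume : Measure (EuclideanSpace ℝ (Fin d))).toSphere) Set.univ)⁻¹ •
    ((volume : Measure (EuclideanSpace ℝ (Fin d))).toSphere)

/-- The Steiner point of a set `K ⊆ ℝ^d`:
`St(K) = d · E_{v ∼ Unif(S^{d−1})} [ (sup_{q ∈ K} ⟨v, q⟩) · v ]`. -/
noncomputable def steinerPoint (d : ℕ) (K : Set (EuclideanSpace ℝ (Fin d))) :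
    EuclideanSpace ℝ (Fin d) :=
  (d : ℝ) • ∫ v, (sSup ((fun q => ⟪(v : EuclideanSpace ℝ (Fin d)), q⟫) '' K)) •
      (v : EuclideanSpace ℝ (Fin d)) ∂(uniformSphereMeasure d)

/-! The Steiner point is `d` times the vector integral `∫ h_K(v) • v` of the support function
`h_K` over the sphere. For `A ⊆ B` we have `h_A ≤ h_B` and `‖v‖ = 1`, so one step moves the
Steiner point by at most `d (∫ h_B - ∫ h_A)`, and these bounds telescope to
`d (∫ h_{K₀} - ∫ h_{K_T})`. The sphere measure is symmetric under `v ↦ -v`; hence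
`∫ h_{K_T} ≥ ∫ ⟪v, q⟫ = 0` for any `q ∈ K_T`, and `∫ h_{K₀}` is half the mean width
`∫ (h_{K₀}(v) + h_{K₀}(-v))`, which is at most `diam K₀`. -/

open Set

section SupportFunction

variable {E : Type*} [NormedAddCommGroup E] [InnerProductSpace ℝ E] {K L : Set E}

noncomputable def supportFunction (K : Set E) (v : E) : ℝ :=
  sSup ((fun q => ⟪v, q⟫) '' K)

theorem le_supportFunction (hK : IsCompact K) {q : E} (hq : q ∈ K) (v : E) :
    ⟪v, q⟫ ≤ supportFunction K v :=
  le_csSup (hK.image (by fun_prop)).bddAbove (mem_image_of_mem _ hq)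

theorem supportFunction_le (hK : K.Nonempty) {v : E} {c : ℝ} (h : ∀ q ∈ K, ⟪v, q⟫ ≤ c) :
    supportFunction K v ≤ c :=
  csSup_le (hK.image _) (forall_mem_image.2 h)

theorem supportFunction_mono (hK : K.Nonempty) (hL : IsCompact L) (hKL : K ⊆ L) (v : E) :
    supportFunction K v ≤ supportFunction L v :=
  supportFunction_le hK fun _ hq => le_supportFunction hL (hKL hq) v

theorem continuous_supportFunction (hK : IsCompact K) : Continuous (supportFunction K) :=
  hK.continuous_sSup (f := fun v q : E => ⟪v, q⟫) (by fun_prop)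

theorem supportFunction_add_supportFunction_neg_le (hK : K.Nonempty) (hb : Bornology.IsBounded K)
    (v : E) : supportFunction K v + supportFunction K (-v) ≤ ‖v‖ * diam K := by
  rw [← le_sub_iff_add_le]
  refine supportFunction_le hK fun p hp => ?_
  rw [le_sub_comm]
  refine supportFunction_le hK fun q hq => ?_
  calc ⟪-v, q⟫ = ⟪v, p - q⟫ - ⟪v, p⟫ := by rw [inner_neg_left, inner_sub_right]; ring
    _ ≤ ‖v‖ * ‖p - q‖ - ⟪v, p⟫ := by gcongr; exact real_inner_le_norm v (p - q)
    _ ≤ ‖v‖ * diam K - ⟪v, p⟫ := by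
      gcongr; rw [← dist_eq_norm]; exact dist_le_diam_of_mem hb hp hq

end SupportFunction

section SphereMeasure

theorem Continuous.integrable_of_compactSpace {X F : Type*} [TopologicalSpace X] [CompactSpace X]
    [MeasurableSpace X] [OpensMeasurableSpace X] [NormedAddCommGroup F] {μ : Measure X}
    [IsFiniteMeasure μ] {f : X → F} (hf : Continuous f) : Integrable f μ :=
  hf.integrable_of_hasCompactSupport (.of_compactSpace f)

theorem integral_comp_neg_sphere {E F : Type*} [NormedAddCommGroup E] [MeasurableSpace E]
    [BorelSpace E] [NormedAddCommGroup F] [NormedSpace ℝ F] (ν : Measure (sphere (0 : E) 1))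
    [ν.IsNegInvariant] (f : sphere (0 : E) 1 → F) : ∫ v, f (-v) ∂ν = ∫ v, f v ∂ν :=
  (Measure.measurePreserving_neg ν).integral_comp (MeasurableEquiv.neg _).measurableEmbedding f

variable {E : Type*} [NormedAddCommGroup E] [InnerProductSpace ℝ E] [MeasurableSpace E]
  [BorelSpace E] {ν : Measure (sphere (0 : E) 1)}

theorem integral_inner_sphere_eq_zero [ν.IsNegInvariant] (q : E) : ∫ v, ⟪(v : E), q⟫ ∂ν = 0 := by
  have h := integral_comp_neg_sphere ν fun v => ⟪(v : E), q⟫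
  simp only [coe_neg_sphere, inner_neg_left, integral_neg] at h
  linarith

theorem integrable_supportFunction_sphere [FiniteDimensional ℝ E] [IsFiniteMeasure ν] {K : Set E}
    (hK : IsCompact K) : Integrable (fun v : sphere (0 : E) 1 => supportFunction K v) ν :=
  ((continuous_supportFunction hK).comp continuous_subtype_val).integrable_of_compactSpace

theorem integral_supportFunction_sphere_nonneg [FiniteDimensional ℝ E] [IsFiniteMeasure ν]
    [ν.IsNegInvariant] {K : Set E} (hK : IsCompact K) (hne : K.Nonempty) :
    0 ≤ ∫ v, supportFunction K v ∂ν := by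
  obtain ⟨q, hq⟩ := hne
  calc 0 = ∫ v, ⟪(v : E), q⟫ ∂ν := (integral_inner_sphere_eq_zero q).symm
    _ ≤ ∫ v, supportFunction K v ∂ν :=
      integral_mono
        (Continuous.integrable_of_compactSpace (by fun_prop))
        (integrable_supportFunction_sphere hK) fun v => le_supportFunction hK hq v

theorem integral_supportFunction_sphere_le_diam_div_two [FiniteDimensional ℝ E]
    [IsZeroOrProbabilityMeasure ν] [ν.IsNegInvariant] {K : Set E} (hK : IsCompact K)
    (hne : K.Nonempty) : ∫ v, supportFunction K v ∂ν ≤ diam K / 2 := by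
  have hint := integrable_supportFunction_sphere (ν := ν) hK
  have hint_neg : Integrable (fun v : sphere (0 : E) 1 => supportFunction K (-(v : E))) ν :=
    ((continuous_supportFunction hK).comp (by fun_prop)).integrable_of_compactSpace
  have hflip : ∫ v, supportFunction K (-(v : E)) ∂ν = ∫ v, supportFunction K v ∂ν := by
    simpa only [coe_neg_sphere] using integral_comp_neg_sphere ν fun v => supportFunction K v
  have hwidth : ∫ v, (supportFunction K v + supportFunction K (-(v : E))) ∂ν ≤ diam K := calc
    _ ≤ ∫ _v, diam K ∂ν := by
      refine integral_mono (hint.add hint_neg) (integrable_const _) fun v => ?_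
      simpa only [norm_eq_of_mem_sphere, one_mul] using
        supportFunction_add_supportFunction_neg_le hne hK.isBounded (v : E)
    _ ≤ diam K := by
      rw [integral_const, smul_eq_mul]
      exact mul_le_of_le_one_left diam_nonneg measureReal_le_one
  rw [integral_add hint hint_neg, hflip] at hwidth
  linarith

theorem norm_integral_supportFunction_smul_sub_le [FiniteDimensional ℝ E] [IsFiniteMeasure ν]
    {A B : Set E} (hA : IsCompact A) (hne : A.Nonempty) (hB : IsCompact B) (hAB : A ⊆ B) :
    ‖∫ v, supportFunction A v • (v : E) ∂ν - ∫ v, supportFunction B v • (v : E) ∂ν‖ ≤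
      ∫ v, supportFunction B v ∂ν - ∫ v, supportFunction A v ∂ν := by
  have hint {K : Set E} (hK : IsCompact K) :
      Integrable (fun v : sphere (0 : E) 1 => supportFunction K v • (v : E)) ν :=
    (((continuous_supportFunction hK).comp continuous_subtype_val).smul
      continuous_subtype_val).integrable_of_compactSpace
  rw [← integral_sub (hint hA) (hint hB), ← integral_sub (integrable_supportFunction_sphere hB)
    (integrable_supportFunction_sphere hA)]
  refine (norm_integral_le_integral_norm _).trans_eq (integral_congr_ae (ae_of_all _ fun v => ?_))
  dsimp only
  rw [← sub_smul, norm_smul, norm_eq_of_mem_sphere, mul_one, Real.norm_eq_abs, abs_sub_comm,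
    abs_of_nonneg (sub_nonneg.2 (supportFunction_mono hne hB hAB v))]

end SphereMeasure

section UniformSphereMeasure

instance MeasureTheory.Measure.IsNegInvariant.smul {G : Type*} [MeasurableSpace G] [Neg G]
    (μ : Measure G) [μ.IsNegInvariant] (c : ENNReal) : (c • μ).IsNegInvariant :=
  ⟨by rw [Measure.neg_def, Measure.map_smul, ← Measure.neg_def, Measure.neg_eq_self]⟩

instance MeasureTheory.Measure.toSphere.isNegInvariant {E : Type*} [NormedAddCommGroup E]
    [NormedSpace ℝ E] [MeasurableSpace E] [BorelSpace E] (μ : Measure E) [μ.IsNegInvariant] :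
    μ.toSphere.IsNegInvariant := by
  refine ⟨Measure.ext fun s hs => ?_⟩
  have himage : ((↑) '' (-s) : Set E) = -((↑) '' s) :=
    Set.image_neg_of_apply_neg_eq_neg fun v _ => coe_neg_sphere v
  rw [Measure.neg_apply, μ.toSphere_apply' hs.neg, μ.toSphere_apply' hs, himage, Set.smul_neg,
    Measure.measure_neg]

instance (d : ℕ) : (uniformSphereMeasure d).IsNegInvariant := by
  unfold uniformSphereMeasure; infer_instance

instance (d : ℕ) : IsZeroOrProbabilityMeasure (uniformSphereMeasure d) := by
  unfold uniformSphereMeasure; infer_instance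

end UniformSphereMeasure

section SteinerPoint

variable {d : ℕ}

theorem steinerPoint_eq_smul_integral (K : Set (EuclideanSpace ℝ (Fin d))) :
    steinerPoint d K = (d : ℝ) • ∫ v, supportFunction K v • (v : EuclideanSpace ℝ (Fin d))
      ∂uniformSphereMeasure d :=
  rfl

theorem norm_steinerPoint_sub_le {A B : Set (EuclideanSpace ℝ (Fin d))} (hA : IsCompact A)
    (hne : A.Nonempty) (hB : IsCompact B) (hAB : A ⊆ B) :
    ‖steinerPoint d A - steinerPoint d B‖ ≤
      d * (∫ v, supportFunction B v ∂uniformSphereMeasure d -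
        ∫ v, supportFunction A v ∂uniformSphereMeasure d) := by
  rw [steinerPoint_eq_smul_integral, steinerPoint_eq_smul_integral, ← smul_sub, norm_smul,
    Real.norm_natCast]
  gcongr
  exact norm_integral_supportFunction_smul_sub_le hA hne hB hAB

end SteinerPoint

theorem steinerPoint_total_movement_le_general
    (d T : ℕ) (K : ℕ → Set (EuclideanSpace ℝ (Fin d)))
    (hne : ∀ t ≤ T, (K t).Nonempty)
    (hcpt : ∀ t ≤ T, IsCompact (K t))
    (hnested : ∀ t < T, K (t + 1) ⊆ K t) :
    ∑ t ∈ Finset.range T, ‖steinerPoint d (K (t + 1)) - steinerPoint d (K t)‖ ≤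
      ((d : ℝ) / 2) * Metric.diam (K 0) := by
  set I : ℕ → ℝ := fun t => ∫ v, supportFunction (K t) v ∂uniformSphereMeasure d
  calc ∑ t ∈ Finset.range T, ‖steinerPoint d (K (t + 1)) - steinerPoint d (K t)‖
      ≤ ∑ t ∈ Finset.range T, (d : ℝ) * (I t - I (t + 1)) := by
        refine Finset.sum_le_sum fun t ht => ?_
        have ht : t < T := Finset.mem_range.1 ht
        exact norm_steinerPoint_sub_le (hcpt _ ht) (hne _ ht) (hcpt _ ht.le) (hnested t ht)
    _ = d * (I 0 - I T) := by rw [← Finset.mul_sum, Finset.sum_range_sub']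
    _ ≤ d * (diam (K 0) / 2 - 0) := by
        gcongr
        · exact integral_supportFunction_sphere_le_diam_div_two (hcpt 0 T.zero_le)
            (hne 0 T.zero_le)
        · exact integral_supportFunction_sphere_nonneg (hcpt T le_rfl) (hne T le_rfl)
    _ = (d / 2) * diam (K 0) := by ring

/-- **Competitiveness of the Steiner point selector for nested convex body chasing.**
Let `d ≥ 1` and let `K₀ ⊇ K₁ ⊇ … ⊇ K_T` be nested nonempty compact convex subsets of `ℝ^d`.
Then `∑_{t=0}^{T−1} ‖St(K_{t+1}) − St(K_t)‖ ≤ (d/2) · diam(K₀)`. -/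
theorem steinerPoint_total_movement_le
    (d T : ℕ) (hd : 1 ≤ d) (K : ℕ → Set (EuclideanSpace ℝ (Fin d)))
    (hne : ∀ t ≤ T, (K t).Nonempty)
    (hcpt : ∀ t ≤ T, IsCompact (K t))
    (hcvx : ∀ t ≤ T, Convex ℝ (K t))
    (hnested : ∀ t < T, K (t + 1) ⊆ K t) :
    ∑ t ∈ Finset.range T, ‖steinerPoint d (K (t + 1)) - steinerPoint d (K t)‖ ≤
      ((d : ℝ) / 2) * Metric.diam (K 0) :=
  steinerPoint_total_movement_le_general d T K hne hcpt hnested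
end
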